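/- arXiv:2309.12185 — 13 statements merged into one kernel-verified Lean document; each statement's English description precedes it below -/
import Mathlib

section
/- If A i i < b i (i.e. i ∈ I₃), x ∈ S(aᵢ, bᵢ) and x i = b i, then there exists j₀ ∈ J_i such that x j₀ ≥ b i. -/
open Finset

variable {n : ℕ}

/-- max_{j} min{A i j, x i, x j} -/
noncomputable def maxmin (hn : 0 < n) (A : Fin n → Fin n → ℝ) (x : Fin n → ℝ) (i : Fin n) : ℝ :=
  Finset.univ.sup' (Finset.univ_nonempty_iff.mpr (Fin.pos_iff_nonempty.mp hn))
    (fun j => min (A i j) (min (x i) (x j)))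

def inBox (x : Fin n → ℝ) : Prop := ∀ j, x j ∈ Set.Icc (0:ℝ) 1

/-- S(aᵢ, bᵢ) -/
noncomputable def SeqSet (hn : 0 < n) (A : Fin n → Fin n → ℝ) (b : Fin n → ℝ) (i : Fin n) :
    Set (Fin n → ℝ) :=
  {x | inBox x ∧ maxmin hn A x i = b i}

/-- S(A, b) -/
noncomputable def SallSet (hn : 0 < n) (A : Fin n → Fin n → ℝ) (b : Fin n → ℝ) :
    Set (Fin n → ℝ) :=
  {x | inBox x ∧ ∀ i, maxmin hn A x i = b i}

/-- X̄(i) = X̄(i,1) -/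
noncomputable def Xbar1 (b : Fin n → ℝ) (i : Fin n) : Fin n → ℝ :=
  fun j => if j = i then b i else 1

/-- X̲(i) -/
noncomputable def Xund0 (b : Fin n → ℝ) (i : Fin n) : Fin n → ℝ :=
  fun j => if j = i then b i else 0

/-- X̄(i,2) -/
noncomputable def Xbar2 (A : Fin n → Fin n → ℝ) (b : Fin n → ℝ) (i : Fin n) : Fin n → ℝ :=
  fun j => if A i j > b i then b i else 1

/-- X̲(i,j) -/
noncomputable def XundJ (b : Fin n → ℝ) (i j : Fin n) : Fin n → ℝ :=
  fun k => if k = i ∨ k = j then b i else 0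

noncomputable def I1set (A : Fin n → Fin n → ℝ) (b : Fin n → ℝ) : Finset (Fin n) :=
  Finset.univ.filter (fun i => A i i > b i)

noncomputable def I2set (A : Fin n → Fin n → ℝ) (b : Fin n → ℝ) : Finset (Fin n) :=
  Finset.univ.filter (fun i => A i i = b i)

noncomputable def I3set (A : Fin n → Fin n → ℝ) (b : Fin n → ℝ) : Finset (Fin n) :=
  Finset.univ.filter (fun i => A i i < b i)

/-- componentwise max over an index set, zero vector when empty -/
noncomputable def vsup (s : Finset (Fin n)) (f : Fin n → Fin n → ℝ) : Fin n → ℝ :=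
  fun j => if h : s.Nonempty then s.sup' h (fun i => f i j) else 0

/-- componentwise min over an index set, all-ones vector when empty -/
noncomputable def vinf (s : Finset (Fin n)) (f : Fin n → Fin n → ℝ) : Fin n → ℝ :=
  fun j => if h : s.Nonempty then s.inf' h (fun i => f i j) else 1

noncomputable def X1lo (A : Fin n → Fin n → ℝ) (b : Fin n → ℝ) : Fin n → ℝ :=
  vsup (I1set A b) (Xund0 b)

noncomputable def X1hi (A : Fin n → Fin n → ℝ) (b : Fin n → ℝ) : Fin n → ℝ :=
  vinf (I1set A b) (Xbar1 b)

noncomputable def X2lo (A : Fin n → Fin n → ℝ) (b : Fin n → ℝ) : Fin n → ℝ :=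
  vsup (I2set A b) (Xund0 b)

/-- X̄(i,t) for t ∈ {1,2} -/
noncomputable def Xsel (A : Fin n → Fin n → ℝ) (b : Fin n → ℝ) (t : ℕ) (i : Fin n) : Fin n → ℝ :=
  if t = 1 then Xbar1 b i else Xbar2 A b i

noncomputable def X2hi (A : Fin n → Fin n → ℝ) (b : Fin n → ℝ) (e' : Fin n → ℕ) : Fin n → ℝ :=
  vinf (I2set A b) (fun i => Xsel A b (e' i) i)

noncomputable def X3lo (A : Fin n → Fin n → ℝ) (b : Fin n → ℝ) (el : Fin n → Fin n) : Fin n → ℝ :=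
  vsup (I3set A b) (fun i => XundJ b i (el i))

noncomputable def X3hi (A : Fin n → Fin n → ℝ) (b : Fin n → ℝ) (e'' : Fin n → ℕ) : Fin n → ℝ :=
  vinf (I3set A b) (fun i => Xsel A b (e'' i) i)

/-- membership of e̲ in E̲ : e̲(i) ∈ J_i for all i ∈ I₃ -/
def memEund (A : Fin n → Fin n → ℝ) (b : Fin n → ℝ) (el : Fin n → Fin n) : Prop :=
  ∀ i, A i i < b i → b i ≤ A i (el i)

/-- membership of e' in E' -/
def memE' (A : Fin n → Fin n → ℝ) (b : Fin n → ℝ) (e' : Fin n → ℕ) : Prop :=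
  ∀ i, A i i = b i → e' i = 1 ∨ e' i = 2

/-- membership of e'' in E'' -/
def memE'' (A : Fin n → Fin n → ℝ) (b : Fin n → ℝ) (e'' : Fin n → ℕ) : Prop :=
  ∀ i, A i i < b i → e'' i = 1 ∨ e'' i = 2

noncomputable def lowVec (A : Fin n → Fin n → ℝ) (b : Fin n → ℝ) (el : Fin n → Fin n) :
    Fin n → ℝ :=
  fun j => max (X1lo A b j) (max (X2lo A b j) (X3lo A b el j))

noncomputable def hiVec (A : Fin n → Fin n → ℝ) (b : Fin n → ℝ) (e' e'' : Fin n → ℕ) :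
    Fin n → ℝ :=
  fun j => min (X1hi A b j) (min (X2hi A b e' j) (X3hi A b e'' j))

/-- admissibility of a triple -/
noncomputable def Admissible (A : Fin n → Fin n → ℝ) (b : Fin n → ℝ)
    (el : Fin n → Fin n) (e' e'' : Fin n → ℕ) : Prop :=
  ∀ j, lowVec A b el j ≤ hiVec A b e' e'' j

/-- membership in T -/
noncomputable def memT (A : Fin n → Fin n → ℝ) (b : Fin n → ℝ)
    (el : Fin n → Fin n) (e' e'' : Fin n → ℕ) : Prop :=
  memEund A b el ∧ memE' A b e' ∧ memE'' A b e'' ∧ Admissible A b el e' e''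

noncomputable def xe (A : Fin n → Fin n → ℝ) (b : Fin n → ℝ) (c : Fin n → ℝ)
    (el : Fin n → Fin n) (e' e'' : Fin n → ℕ) : Fin n → ℝ :=
  fun j => if 0 ≤ c j then lowVec A b el j else hiVec A b e' e'' j

theorem stmt3 (n : ℕ) (hn : 0 < n) (A : Fin n → Fin n → ℝ) (b : Fin n → ℝ)
    (hA : ∀ i j, A i j ∈ Set.Icc (0:ℝ) 1) (hb : ∀ i, b i ∈ Set.Icc (0:ℝ) 1)
    (i : Fin n) (hi : A i i < b i) (x : Fin n → ℝ) (hx : x ∈ SeqSet hn A b i)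
    (hxi : x i = b i) :
    ∃ j₀, b i ≤ A i j₀ ∧ b i ≤ x j₀ := by
  obtain ⟨-, h⟩ := hx
  unfold maxmin at h
  obtain ⟨j₀, -, hj⟩ := Finset.exists_mem_eq_sup'
    (Finset.univ_nonempty_iff.mpr (Fin.pos_iff_nonempty.mp hn))
    (fun j => min (A i j) (min (x i) (x j)))
  rw [hj, hxi] at h
  refine ⟨j₀, ?_, ?_⟩
  · calc b i = _ := h.symm
      _ ≤ A i j₀ := min_le_left _ _
  · calc b i = _ := h.symm
      _ ≤ min (b i) (x j₀) := min_le_right _ _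
      _ ≤ x j₀ := min_le_right _ _
end

section
/- If A i i > b i (i.e. i ∈ I₁) and x ∈ S(aᵢ, bᵢ), then x i = b i. -/
open Finset

variable {n : ℕ}

theorem stmt4 (n : ℕ) (hn : 0 < n) (A : Fin n → Fin n → ℝ) (b : Fin n → ℝ)
    (hA : ∀ i j, A i j ∈ Set.Icc (0:ℝ) 1) (hb : ∀ i, b i ∈ Set.Icc (0:ℝ) 1)
    (i : Fin n) (hi : b i < A i i) (x : Fin n → ℝ) (hx : x ∈ SeqSet hn A b i) :
    x i = b i := by
  obtain ⟨hbox, heq⟩ := hx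
  unfold maxmin at heq
  have hne : (Finset.univ : Finset (Fin n)).Nonempty := Finset.univ_nonempty_iff.mpr (Fin.pos_iff_nonempty.mp hn)
  -- upper: x i ≤ b i
  have h1 : min (A i i) (min (x i) (x i)) ≤ b i := by
    rw [← heq]; exact Finset.le_sup' (fun j => min (A i j) (min (x i) (x j))) (Finset.mem_univ i)
  have hxi_le : x i ≤ b i := by
    rcases le_total (A i i) (x i) with h | h
    · simp only [min_self] at h1
      rcases min_le_iff.mp h1 with h' | h'
      · linarith
      · linarith
    · simpa [min_self, min_eq_right h] using h1
  -- lower: b i ≤ x i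
  have h2 : Finset.univ.sup' hne (fun j => min (A i j) (min (x i) (x j))) ≤ x i := by
    apply Finset.sup'_le
    intro j _
    exact le_trans (min_le_right _ _) (min_le_left _ _)
  rw [heq] at h2
  linarith
end

section
/- If A i i ≤ b i (i.e. i ∈ I₂ ∪ I₃), x ∈ S(aᵢ, bᵢ) and x i > b i, then x j ≤ b i for every j ∈ J_i¹ = {j : A i j > b i}. -/
open Finset

variable {n : ℕ}

theorem stmt5 (n : ℕ) (hn : 0 < n) (A : Fin n → Fin n → ℝ) (b : Fin n → ℝ)
    (hA : ∀ i j, A i j ∈ Set.Icc (0:ℝ) 1) (hb : ∀ i, b i ∈ Set.Icc (0:ℝ) 1)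
    (i : Fin n) (hi : A i i ≤ b i) (x : Fin n → ℝ) (hx : x ∈ SeqSet hn A b i)
    (hxi : b i < x i) :
    ∀ j, b i < A i j → x j ≤ b i := by
  intro j hj
  have h := hx.2
  have hle : min (A i j) (min (x i) (x j)) ≤ b i := by
    rw [← h]
    exact Finset.le_sup' (fun j => min (A i j) (min (x i) (x j))) (Finset.mem_univ j)
  rcases le_or_gt (x j) (b i) with h' | h'
  · exact h'
  · exfalso
    have : b i < min (A i j) (min (x i) (x j)) := lt_min hj (lt_min hxi h')
    linarith
end

section
/- If A i i < b i (i.e. i ∈ I₃), x ∈ S(aᵢ, bᵢ) and x i > b i, then there exists j₀ ∈ J_i such that either (j₀ ∈ J_i¹ and x j₀ = b i) or (j₀ ∈ J_i² and x j₀ ≥ b i). -/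
open Finset

variable {n : ℕ}

theorem stmt6 (n : ℕ) (hn : 0 < n) (A : Fin n → Fin n → ℝ) (b : Fin n → ℝ)
    (hA : ∀ i j, A i j ∈ Set.Icc (0:ℝ) 1) (hb : ∀ i, b i ∈ Set.Icc (0:ℝ) 1)
    (i : Fin n) (hi : A i i < b i) (x : Fin n → ℝ) (hx : x ∈ SeqSet hn A b i)
    (hxi : b i < x i) :
    ∃ j₀, b i ≤ A i j₀ ∧
      ((b i < A i j₀ ∧ x j₀ = b i) ∨ (A i j₀ = b i ∧ b i ≤ x j₀)) := by
  obtain ⟨hbox, hmax⟩ := hx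
  unfold maxmin at hmax
  obtain ⟨j₀, _, hj₀⟩ := Finset.exists_mem_eq_sup' (Finset.univ_nonempty_iff.mpr
    (Fin.pos_iff_nonempty.mp hn)) (fun j => min (A i j) (min (x i) (x j)))
  rw [hj₀] at hmax
  have h1 : b i ≤ A i j₀ := hmax ▸ min_le_left _ _
  have h2 : b i ≤ x j₀ := hmax ▸ le_trans (min_le_right _ _) (min_le_right _ _)
  refine ⟨j₀, h1, ?_⟩
  rcases eq_or_lt_of_le h1 with he | hl
  · exact Or.inr ⟨he.symm, h2⟩
  · refine Or.inl ⟨hl, le_antisymm ?_ h2⟩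
    by_contra hc
    push_neg at hc
    have : b i < min (A i j₀) (min (x i) (x j₀)) := lt_min hl (lt_min hxi hc)
    linarith [hmax.le]
end

section
/- If A i i > b i (i.e. i ∈ I₁), then S(aᵢ, bᵢ) = [X̲(i), X̄(i)], the set of x with X̲(i) ≤ x ≤ X̄(i) componentwise. -/
open Finset

variable {n : ℕ}

theorem stmt7 (n : ℕ) (hn : 0 < n) (A : Fin n → Fin n → ℝ) (b : Fin n → ℝ)
    (hA : ∀ i j, A i j ∈ Set.Icc (0:ℝ) 1) (hb : ∀ i, b i ∈ Set.Icc (0:ℝ) 1)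
    (i : Fin n) (hi : b i < A i i) :
    SeqSet hn A b i = Set.Icc (Xund0 b i) (Xbar1 b i) := by
  ext x
  simp only [SeqSet, Set.mem_setOf_eq, Set.mem_Icc, Pi.le_def]
  constructor
  · rintro ⟨hbox, heq⟩
    have h1 : min (A i i) (min (x i) (x i)) ≤ maxmin hn A x i := by
      unfold maxmin; exact Finset.le_sup' (fun j => min (A i j) (min (x i) (x j))) (Finset.mem_univ i)
    rw [heq] at h1
    have h2 : maxmin hn A x i ≤ x i := by
      unfold maxmin
      apply Finset.sup'_le
      intro j _
      exact le_trans (min_le_right _ _) (min_le_left _ _)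
    rw [heq] at h2
    simp only [min_self] at h1
    have hxi : x i = b i := by
      rcases min_le_iff.mp h1 with h | h <;> linarith
    constructor
    · intro j; simp only [Xund0]; split_ifs with h
      · subst h; exact hxi.ge
      · exact (hbox j).1
    · intro j; simp only [Xbar1]; split_ifs with h
      · subst h; exact hxi.le
      · exact (hbox j).2
  · rintro ⟨hlo, hhi⟩
    have hxi : x i = b i := by
      have h1 := hhi i; have h2 := hlo i
      simp [Xbar1] at h1
      simp [Xund0] at h2
      linarith
    have hbox : inBox x := by
      intro j
      by_cases h : j = i
      · subst h; rw [hxi]; exact hb j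
      · have h1 := hlo j; have h2 := hhi j
        simp only [Xund0, if_neg h] at h1
        simp only [Xbar1, if_neg h] at h2
        exact ⟨h1, h2⟩
    refine ⟨hbox, ?_⟩
    apply le_antisymm
    · unfold maxmin
      apply Finset.sup'_le
      intro j _
      calc min (A i j) (min (x i) (x j)) ≤ x i :=
            le_trans (min_le_right _ _) (min_le_left _ _)
        _ = b i := hxi
    · have hle : min (A i i) (min (x i) (x i)) ≤ maxmin hn A x i :=
        Finset.le_sup' (fun j => min (A i j) (min (x i) (x j))) (Finset.mem_univ i)
      refine le_trans ?_ hle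
      simp only [min_self, hxi]
      exact le_min (le_of_lt hi) le_rfl
end

section
/- If A i i = b i (i.e. i ∈ I₂), then S(aᵢ, bᵢ) = [X̲(i), X̄(i,1)] ∪ [X̲(i), X̄(i,2)]. -/
open Finset

variable {n : ℕ}

theorem stmt8 (n : ℕ) (hn : 0 < n) (A : Fin n → Fin n → ℝ) (b : Fin n → ℝ)
    (hA : ∀ i j, A i j ∈ Set.Icc (0:ℝ) 1) (hb : ∀ i, b i ∈ Set.Icc (0:ℝ) 1)
    (i : Fin n) (hi : A i i = b i) :
    SeqSet hn A b i =
      Set.Icc (Xund0 b i) (Xbar1 b i) ∪ Set.Icc (Xund0 b i) (Xbar2 A b i) := by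
  ext x
  simp only [SeqSet, maxmin, Set.mem_setOf_eq, Set.mem_union, Set.mem_Icc, Pi.le_def,
    Xund0, Xbar1, Xbar2]
  constructor
  · rintro ⟨hbox, heq⟩
    have hle : ∀ j, min (A i j) (min (x i) (x j)) ≤ b i := by
      intro j
      rw [← heq]
      exact Finset.le_sup' (fun k => min (A i k) (min (x i) (x k))) (Finset.mem_univ j)
    obtain ⟨j, -, hj⟩ := Finset.exists_mem_eq_sup'
      (H := Finset.univ_nonempty_iff.mpr (Fin.pos_iff_nonempty.mp hn))
      (fun j => min (A i j) (min (x i) (x j)))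
    rw [hj] at heq
    have hxi : b i ≤ x i := heq ▸ (min_le_right _ _).trans (min_le_left _ _)
    have hlo : ∀ k, (if k = i then b i else 0) ≤ x k := by
      intro k
      split
      · subst ‹k = i›; exact hxi
      · exact (hbox k).1
    rcases le_or_gt (x i) (b i) with hcase | hcase
    · left
      refine ⟨hlo, fun k => ?_⟩
      split
      · subst ‹k = i›; exact hcase
      · exact (hbox k).2
    · right
      refine ⟨hlo, fun k => ?_⟩
      split
      · rename_i hAk
        by_contra h
        push_neg at h
        have := hle k
        rw [min_le_iff, min_le_iff] at this
        rcases this with h1 | h2 | h3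
        · exact absurd h1 (not_le.mpr hAk)
        · exact absurd h2 (not_le.mpr hcase)
        · exact absurd h3 (not_le.mpr h)
      · exact (hbox k).2
  · rintro (⟨hlo, hhi⟩ | ⟨hlo, hhi⟩)
    all_goals {
      have hxi : b i ≤ x i := by have := hlo i; simpa using this
      have hbox : inBox x := by
        intro k
        constructor
        · exact le_trans (by split <;> [exact (hb i).1; exact le_rfl]) (hlo k)
        · refine le_trans (hhi k) ?_
          split <;> [exact (hb i).2; exact le_rfl]
      refine ⟨hbox, le_antisymm (Finset.sup'_le _ _ fun j _ => ?_) ?_⟩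
      · have hj := hhi j
        split at hj
        · first
          | { subst ‹j = i›
              exact (min_le_right _ _).trans ((min_le_right _ _).trans hj) }
          | exact (min_le_right _ _).trans ((min_le_right _ _).trans hj)
        · first
          | exact (min_le_left _ _).trans (le_of_not_gt ‹¬ A i j > b i›)
          | { have hxib : x i ≤ b i := by have := hhi i; simpa using this
              exact (min_le_right _ _).trans ((min_le_left _ _).trans hxib) }
      · refine Finset.le_sup'_of_le _ (Finset.mem_univ i) ?_
        simp only [hi]
        exact le_min le_rfl (le_min hxi hxi)
    }
end

section
/- If A i i < b i (i.e. i ∈ I₃), then S(aᵢ, bᵢ) = (⋃_{j ∈ J_i} [X̲(i,j), X̄(i,1)]) ∪ (⋃_{j ∈ J_i} [X̲(i,j), X̄(i,2)]). -/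
open Finset

variable {n : ℕ}

theorem stmt9 (n : ℕ) (hn : 0 < n) (A : Fin n → Fin n → ℝ) (b : Fin n → ℝ)
    (hA : ∀ i j, A i j ∈ Set.Icc (0:ℝ) 1) (hb : ∀ i, b i ∈ Set.Icc (0:ℝ) 1)
    (i : Fin n) (hi : A i i < b i) :
    SeqSet hn A b i =
      (⋃ j ∈ {j | b i ≤ A i j}, Set.Icc (XundJ b i j) (Xbar1 b i)) ∪
      (⋃ j ∈ {j | b i ≤ A i j}, Set.Icc (XundJ b i j) (Xbar2 A b i)) := by
  ext x
  simp only [SeqSet, Set.mem_setOf_eq, Set.mem_union, Set.mem_iUnion, Set.mem_Icc]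
  obtain ⟨hb0, hb1⟩ := hb i
  have hne : (Finset.univ : Finset (Fin n)).Nonempty :=
    Finset.univ_nonempty_iff.mpr (Fin.pos_iff_nonempty.mp hn)
  constructor
  · rintro ⟨hbox, hmax⟩
    simp only [maxmin] at hmax
    obtain ⟨j, -, hj⟩ := Finset.exists_mem_eq_sup' hne
      (fun j => min (A i j) (min (x i) (x j)))
    have hjeq : min (A i j) (min (x i) (x j)) = b i := by
      rw [← hj]; exact hmax
    have hAj : b i ≤ A i j := hjeq ▸ min_le_left _ _
    have hxi : b i ≤ x i := hjeq ▸ (min_le_right _ _).trans (min_le_left _ _)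
    have hxj : b i ≤ x j := hjeq ▸ (min_le_right _ _).trans (min_le_right _ _)
    have hle : ∀ k, min (A i k) (min (x i) (x k)) ≤ b i := by
      intro k
      rw [← hmax]
      exact Finset.le_sup' (fun j => min (A i j) (min (x i) (x j))) (Finset.mem_univ k)
    have hlo : XundJ b i j ≤ x := by
      intro k
      simp only [XundJ]
      split
      · rcases ‹k = i ∨ k = j› with rfl | rfl
        · exact hxi
        · exact hxj
      · exact (hbox k).1
    by_cases hxib : x i ≤ b i
    · refine Or.inl ⟨j, hAj, hlo, ?_⟩
      intro k
      simp only [Xbar1]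
      split
      · subst ‹k = i›; exact hxib
      · exact (hbox k).2
    · refine Or.inr ⟨j, hAj, hlo, ?_⟩
      intro k
      simp only [Xbar2]
      split
      · have hk := hle k
        rcases min_le_iff.mp hk with h | h
        · exact absurd h (not_le.mpr ‹A i k > b i›)
        · rcases min_le_iff.mp h with h' | h'
          · exact absurd h' hxib
          · exact h'
      · exact (hbox k).2
  · rintro (⟨j, hAj, hlo, hhi⟩ | ⟨j, hAj, hlo, hhi⟩)
    · have hxi1 : b i ≤ x i := by
        have := hlo i; simpa [XundJ] using this
      have hxi2 : x i ≤ b i := by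
        have := hhi i; simpa [Xbar1] using this
      have hxj : b i ≤ x j := by
        have := hlo j; simpa [XundJ] using this
      refine ⟨?_, ?_⟩
      · intro k
        constructor
        · have := hlo k; simp only [XundJ] at this
          split at this
          · linarith
          · exact this
        · have := hhi k; simp only [Xbar1] at this
          split at this
          · linarith
          · exact this
      · simp only [maxmin]
        apply le_antisymm
        · apply Finset.sup'_le
          intro k _
          calc min (A i k) (min (x i) (x k)) ≤ x i :=
                (min_le_right _ _).trans (min_le_left _ _)
            _ ≤ b i := hxi2
        · exact le_trans (le_min hAj (le_min hxi1 hxj))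
            (Finset.le_sup' (fun j => min (A i j) (min (x i) (x j))) (Finset.mem_univ j))
    · have hxi1 : b i ≤ x i := by
        have := hlo i; simpa [XundJ] using this
      have hxj : b i ≤ x j := by
        have := hlo j; simpa [XundJ] using this
      refine ⟨?_, ?_⟩
      · intro k
        constructor
        · have := hlo k; simp only [XundJ] at this
          split at this
          · linarith
          · exact this
        · have := hhi k; simp only [Xbar2] at this
          split at this
          · linarith
          · exact this
      · simp only [maxmin]
        apply le_antisymm
        · apply Finset.sup'_le
          intro k _
          by_cases hk : A i k > b i
          · have := hhi k; simp only [Xbar2, if_pos hk] at this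
            exact le_trans ((min_le_right _ _).trans (min_le_right _ _)) this
          · exact le_trans (min_le_left _ _) (not_lt.mp hk)
        · exact le_trans (le_min hAj (le_min hxi1 hxj))
            (Finset.le_sup' (fun j => min (A i j) (min (x i) (x j))) (Finset.mem_univ j))
end

section
/- If S(A, b) is nonempty, then max{X̲₁, X̲₂} ≤ X̄₁ componentwise. -/
open Finset

variable {n : ℕ}

lemma sol_lb (hn : 0 < n) (A : Fin n → Fin n → ℝ) (b : Fin n → ℝ) {x : Fin n → ℝ}
    (hx : x ∈ SallSet hn A b) (i : Fin n) : b i ≤ x i := by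
  obtain ⟨-, h⟩ := hx
  have h' := h i
  unfold maxmin at h'
  obtain ⟨j, -, hj⟩ := Finset.exists_mem_eq_sup' (Finset.univ_nonempty_iff.mpr
    (Fin.pos_iff_nonempty.mp hn)) (fun j => min (A i j) (min (x i) (x j)))
  rw [hj] at h'
  calc b i = min (A i j) (min (x i) (x j)) := h'.symm
    _ ≤ min (x i) (x j) := min_le_right _ _
    _ ≤ x i := min_le_left _ _

lemma sol_ub (hn : 0 < n) (A : Fin n → Fin n → ℝ) (b : Fin n → ℝ) {x : Fin n → ℝ}
    (hx : x ∈ SallSet hn A b) (i : Fin n) (hi : A i i > b i) : x i ≤ b i := by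
  obtain ⟨-, h⟩ := hx
  have h' : min (A i i) (min (x i) (x i)) ≤ b i := by
    rw [← h i]
    exact Finset.le_sup' (fun j => min (A i j) (min (x i) (x j))) (Finset.mem_univ i)
  simp only [min_self] at h'
  rcases min_le_iff.mp h' with h'' | h''
  · exact absurd h'' (not_le.mpr hi)
  · exact h''

theorem stmt11 (n : ℕ) (hn : 0 < n) (A : Fin n → Fin n → ℝ) (b : Fin n → ℝ)
    (hA : ∀ i j, A i j ∈ Set.Icc (0:ℝ) 1) (hb : ∀ i, b i ∈ Set.Icc (0:ℝ) 1)
    (hS : (SallSet hn A b).Nonempty) :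
    ∀ j, max (X1lo A b j) (X2lo A b j) ≤ X1hi A b j := by
  obtain ⟨x, hx⟩ := hS
  intro j
  have hx01 := hx.1 j
  have hlo : ∀ (s : Finset (Fin n)), (∀ i ∈ s, b i ≤ x i) → vsup s (Xund0 b) j ≤ x j := by
    intro s hs
    unfold vsup
    split
    · next hne =>
      apply Finset.sup'_le
      intro i hi
      unfold Xund0
      split
      · next hji => subst hji; exact hs _ hi
      · exact hx01.1
    · exact hx01.1
  have h1 : X1lo A b j ≤ x j := by
    apply hlo
    intro i hi
    exact sol_lb hn A b hx i
  have h2 : X2lo A b j ≤ x j := by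
    apply hlo
    intro i hi
    exact sol_lb hn A b hx i
  have h3 : x j ≤ X1hi A b j := by
    unfold X1hi vinf
    split
    · next hne =>
      apply Finset.le_inf'
      intro i hi
      unfold Xbar1
      split
      · next hji =>
        subst hji
        exact sol_ub hn A b hx j (by simpa [I1set] using hi)
      · exact hx01.2
    · exact hx01.2
  exact max_le (h1.trans h3) (h2.trans h3)
end

section
/- If S(A, b) is nonempty, then S(A, b) = ⋃_{e̲ ∈ E̲} ⋃_{e'' ∈ E''} ⋃_{e' ∈ E'} [max{X̲₁, X̲₂, X̲₃(e̲)}, min{X̄₁, X̄₂(e'), X̄₃(e'')}], where max and min of vectors are taken componentwise. -/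
open Finset

variable {n : ℕ}

lemma le_vsup {n : ℕ} {s : Finset (Fin n)} {f : Fin n → Fin n → ℝ} {i j : Fin n}
    (hi : i ∈ s) : f i j ≤ vsup s f j := by
  unfold vsup
  rw [dif_pos ⟨i, hi⟩]
  exact Finset.le_sup' (fun i => f i j) hi

lemma vsup_nonneg {n : ℕ} {s : Finset (Fin n)} {f : Fin n → Fin n → ℝ} {j : Fin n}
    (h : ∀ i ∈ s, 0 ≤ f i j) : 0 ≤ vsup s f j := by
  unfold vsup
  split_ifs with hs
  · obtain ⟨i, hi⟩ := hs
    exact le_trans (h i hi) (Finset.le_sup' (fun i => f i j) hi)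
  · exact le_refl 0

lemma vsup_le {n : ℕ} {s : Finset (Fin n)} {f : Fin n → Fin n → ℝ} {j : Fin n} {c : ℝ}
    (h0 : 0 ≤ c) (h : ∀ i ∈ s, f i j ≤ c) : vsup s f j ≤ c := by
  unfold vsup
  split_ifs with hs
  · exact Finset.sup'_le _ _ h
  · exact h0

lemma vinf_le {n : ℕ} {s : Finset (Fin n)} {f : Fin n → Fin n → ℝ} {i j : Fin n}
    (hi : i ∈ s) : vinf s f j ≤ f i j := by
  unfold vinf
  rw [dif_pos ⟨i, hi⟩]
  exact Finset.inf'_le (fun i => f i j) hi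

lemma le_vinf {n : ℕ} {s : Finset (Fin n)} {f : Fin n → Fin n → ℝ} {j : Fin n} {c : ℝ}
    (h1 : c ≤ 1) (h : ∀ i ∈ s, c ≤ f i j) : c ≤ vinf s f j := by
  unfold vinf
  split_ifs with hs
  · exact Finset.le_inf' _ _ h
  · exact h1

lemma vinf_le_one {n : ℕ} {s : Finset (Fin n)} {f : Fin n → Fin n → ℝ} {j : Fin n}
    (h : ∀ i ∈ s, f i j ≤ 1) : vinf s f j ≤ 1 := by
  unfold vinf
  split_ifs with hs
  · obtain ⟨i, hi⟩ := hs
    exact le_trans (Finset.inf'_le (fun i => f i j) hi) (h i hi)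
  · exact le_refl 1

theorem stmt12 (n : ℕ) (hn : 0 < n) (A : Fin n → Fin n → ℝ) (b : Fin n → ℝ)
    (hA : ∀ i j, A i j ∈ Set.Icc (0:ℝ) 1) (hb : ∀ i, b i ∈ Set.Icc (0:ℝ) 1)
    (hS : (SallSet hn A b).Nonempty) :
    SallSet hn A b =
      ⋃ el ∈ {el | memEund A b el}, ⋃ e'' ∈ {e'' | memE'' A b e''},
        ⋃ e' ∈ {e' | memE' A b e'},
          Set.Icc (lowVec A b el) (hiVec A b e' e'') := by
  have hne : (Finset.univ : Finset (Fin n)).Nonempty :=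
    Finset.univ_nonempty_iff.mpr (Fin.pos_iff_nonempty.mp hn)
  ext x
  simp only [Set.mem_iUnion, Set.mem_setOf_eq, Set.mem_Icc, exists_prop]
  constructor
  · rintro ⟨hbox, heq⟩
    have heq' : ∀ i, Finset.univ.sup' hne (fun j => min (A i j) (min (x i) (x j))) = b i :=
      heq
    have hub : ∀ i j, min (A i j) (min (x i) (x j)) ≤ b i := by
      intro i j
      rw [← heq' i]
      exact Finset.le_sup' (fun k => min (A i k) (min (x i) (x k))) (Finset.mem_univ j)
    have hxi : ∀ i, b i ≤ x i := by
      intro i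
      rw [← heq' i]
      exact Finset.sup'_le _ _ fun j _ => le_trans (min_le_right _ _) (min_le_left _ _)
    have key : ∀ i j, b i < A i j → b i < x i → x j ≤ b i := by
      intro i j hAij hx
      by_contra h
      push_neg at h
      exact absurd (hub i j) (not_le.mpr (lt_min hAij (lt_min hx h)))
    have hI1 : ∀ i, b i < A i i → x i = b i := by
      intro i h
      refine le_antisymm ?_ (hxi i)
      by_contra hx
      push_neg at hx
      have h2 := hub i i
      rw [min_self] at h2
      exact absurd h2 (not_le.mpr (lt_min h hx))
    have hch : ∀ i, ∃ j, b i ≤ A i j ∧ b i ≤ x j := by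
      intro i
      obtain ⟨j, -, hj⟩ := Finset.exists_mem_eq_sup' hne
        (fun j => min (A i j) (min (x i) (x j)))
      have hj' : b i ≤ min (A i j) (min (x i) (x j)) := by
        rw [← hj]
        exact (heq' i).ge
      exact ⟨j, hj'.trans (min_le_left _ _),
        hj'.trans ((min_le_right _ _).trans (min_le_right _ _))⟩
    choose f hf1 hf2 using hch
    refine ⟨f, fun i _ => hf1 i, fun i => if b i < x i then 2 else 1, ?_,
      fun i => if b i < x i then 2 else 1, ?_, ?_, ?_⟩
    · intro i _
      by_cases h : b i < x i
      · right; simp [h]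
      · left; simp [h]
    · intro i _
      by_cases h : b i < x i
      · right; simp [h]
      · left; simp [h]
    · refine Pi.le_def.mpr fun j => ?_
      unfold lowVec X1lo X2lo X3lo
      refine max_le ?_ (max_le ?_ ?_)
      · refine vsup_le (hbox j).1 fun i _ => ?_
        unfold Xund0
        split_ifs with hji
        · subst hji; exact hxi j
        · exact (hbox j).1
      · refine vsup_le (hbox j).1 fun i _ => ?_
        unfold Xund0
        split_ifs with hji
        · subst hji; exact hxi j
        · exact (hbox j).1
      · refine vsup_le (hbox j).1 fun i _ => ?_
        unfold XundJ
        split_ifs with hji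
        · rcases hji with hji | hji
          · subst hji; exact hxi j
          · subst hji; exact hf2 i
        · exact (hbox j).1
    · refine Pi.le_def.mpr fun j => ?_
      unfold hiVec X1hi X2hi X3hi
      refine le_min ?_ (le_min ?_ ?_)
      · refine le_vinf (hbox j).2 fun i hi => ?_
        unfold Xbar1
        split_ifs with hji
        · subst hji
          exact le_of_eq (hI1 j (Finset.mem_filter.mp hi).2)
        · exact (hbox j).2
      · refine le_vinf (hbox j).2 fun i hi => ?_
        have hi2 : A i i = b i := (Finset.mem_filter.mp hi).2
        dsimp only
        by_cases hx : b i < x i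
        · rw [if_pos hx]
          unfold Xsel
          rw [if_neg (by norm_num)]
          unfold Xbar2
          split_ifs with hAij
          · exact key i j hAij hx
          · exact (hbox j).2
        · rw [if_neg hx]
          unfold Xsel
          rw [if_pos rfl]
          unfold Xbar1
          split_ifs with hji
          · subst hji; exact not_lt.mp hx
          · exact (hbox j).2
      · refine le_vinf (hbox j).2 fun i hi => ?_
        dsimp only
        by_cases hx : b i < x i
        · rw [if_pos hx]
          unfold Xsel
          rw [if_neg (by norm_num)]
          unfold Xbar2
          split_ifs with hAij
          · exact key i j hAij hx
          · exact (hbox j).2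
        · rw [if_neg hx]
          unfold Xsel
          rw [if_pos rfl]
          unfold Xbar1
          split_ifs with hji
          · subst hji; exact not_lt.mp hx
          · exact (hbox j).2
  · rintro ⟨el, hel, e'', he'', e', he', hlo, hhi⟩
    have hlo' : ∀ j, lowVec A b el j ≤ x j := fun j => hlo j
    have hhi' : ∀ j, x j ≤ hiVec A b e' e'' j := fun j => hhi j
    have hbox : inBox x := by
      intro j
      constructor
      · refine le_trans ?_ (hlo' j)
        unfold lowVec X1lo
        refine le_trans ?_ (le_max_left _ _)
        refine vsup_nonneg fun i _ => ?_
        unfold Xund0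
        split_ifs
        exacts [(hb i).1, le_refl 0]
      · refine le_trans (hhi' j) ?_
        unfold hiVec X1hi
        refine le_trans (min_le_left _ _) ?_
        refine vinf_le_one fun i _ => ?_
        unfold Xbar1
        split_ifs
        exacts [(hb i).2, le_refl 1]
    refine ⟨hbox, fun i => ?_⟩
    have eq_of : (∀ j, min (A i j) (min (x i) (x j)) ≤ b i) →
        (∃ j, b i ≤ min (A i j) (min (x i) (x j))) → maxmin hn A x i = b i := by
      rintro h1 ⟨j, hj⟩
      unfold maxmin
      exact le_antisymm (Finset.sup'_le _ _ fun k _ => h1 k)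
        (le_trans hj (Finset.le_sup' (fun k => min (A i k) (min (x i) (x k)))
          (Finset.mem_univ j)))
    rcases lt_trichotomy (A i i) (b i) with h3 | h2 | h1
    · -- i ∈ I₃
      have hmem : i ∈ I3set A b := Finset.mem_filter.mpr ⟨Finset.mem_univ i, h3⟩
      have hund : ∀ k, (k = i ∨ k = el i) → b i ≤ x k := by
        intro k hk
        refine le_trans ?_ (hlo' k)
        unfold lowVec X3lo
        refine le_trans ?_ (le_trans (le_max_right _ _) (le_max_right _ _))
        refine le_trans ?_ (le_vsup hmem)
        unfold XundJ
        rw [if_pos hk]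
      have hxi : b i ≤ x i := hund i (Or.inl rfl)
      have hxel : b i ≤ x (el i) := hund (el i) (Or.inr rfl)
      have hwit : b i ≤ min (A i (el i)) (min (x i) (x (el i))) :=
        le_min (hel i h3) (le_min hxi hxel)
      have hup : ∀ j, x j ≤ Xsel A b (e'' i) i j := by
        intro j
        refine le_trans (hhi' j) ?_
        unfold hiVec X3hi
        exact le_trans ((min_le_right _ _).trans (min_le_right _ _)) (vinf_le hmem)
      rcases he'' i h3 with h | h
      · have hxib : x i ≤ b i := by
          have := hup i
          rw [h] at this
          unfold Xsel at this
          rw [if_pos rfl] at this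
          unfold Xbar1 at this
          rwa [if_pos rfl] at this
        exact eq_of
          (fun j => le_trans (le_trans (min_le_right _ _) (min_le_left _ _)) hxib)
          ⟨el i, hwit⟩
      · refine eq_of (fun j => ?_) ⟨el i, hwit⟩
        by_cases hAj : b i < A i j
        · have := hup j
          rw [h] at this
          unfold Xsel at this
          rw [if_neg (by norm_num)] at this
          unfold Xbar2 at this
          rw [if_pos hAj] at this
          exact le_trans ((min_le_right _ _).trans (min_le_right _ _)) this
        · exact le_trans (min_le_left _ _) (not_lt.mp hAj)
    · -- i ∈ I₂
      have hmem : i ∈ I2set A b := Finset.mem_filter.mpr ⟨Finset.mem_univ i, h2⟩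
      have hxi : b i ≤ x i := by
        refine le_trans ?_ (hlo' i)
        unfold lowVec X2lo
        refine le_trans ?_ (le_trans (le_max_left _ _) (le_max_right _ _))
        refine le_trans ?_ (le_vsup hmem)
        unfold Xund0
        rw [if_pos rfl]
      have hwit : b i ≤ min (A i i) (min (x i) (x i)) :=
        le_min h2.ge (le_min hxi hxi)
      have hup : ∀ j, x j ≤ Xsel A b (e' i) i j := by
        intro j
        refine le_trans (hhi' j) ?_
        unfold hiVec X2hi
        exact le_trans ((min_le_right _ _).trans (min_le_left _ _)) (vinf_le hmem)
      rcases he' i h2 with h | h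
      · have hxib : x i ≤ b i := by
          have := hup i
          rw [h] at this
          unfold Xsel at this
          rw [if_pos rfl] at this
          unfold Xbar1 at this
          rwa [if_pos rfl] at this
        exact eq_of
          (fun j => le_trans (le_trans (min_le_right _ _) (min_le_left _ _)) hxib)
          ⟨i, hwit⟩
      · refine eq_of (fun j => ?_) ⟨i, hwit⟩
        by_cases hAj : b i < A i j
        · have := hup j
          rw [h] at this
          unfold Xsel at this
          rw [if_neg (by norm_num)] at this
          unfold Xbar2 at this
          rw [if_pos hAj] at this
          exact le_trans ((min_le_right _ _).trans (min_le_right _ _)) this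
        · exact le_trans (min_le_left _ _) (not_lt.mp hAj)
    · -- i ∈ I₁
      have hmem : i ∈ I1set A b := Finset.mem_filter.mpr ⟨Finset.mem_univ i, h1⟩
      have hxi : b i ≤ x i := by
        refine le_trans ?_ (hlo' i)
        unfold lowVec X1lo
        refine le_trans ?_ (le_max_left _ _)
        refine le_trans ?_ (le_vsup hmem)
        unfold Xund0
        rw [if_pos rfl]
      have hxib : x i ≤ b i := by
        refine le_trans (hhi' i) ?_
        unfold hiVec X1hi
        refine le_trans (min_le_left _ _) ?_
        refine le_trans (vinf_le hmem) ?_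
        unfold Xbar1
        rw [if_pos rfl]
      have hwit : b i ≤ min (A i i) (min (x i) (x i)) :=
        le_min h1.le (le_min hxi hxi)
      exact eq_of
        (fun j => le_trans (le_trans (min_le_right _ _) (min_le_left _ _)) hxib)
        ⟨i, hwit⟩
end

section
/- (Rule 3) Let i₀ ∈ I₃ and j ∈ J_{i₀} be such that b i₀ > (X̄₁)_j. Then for every e' ∈ E', every e'' ∈ E'' and every e̲ ∈ E̲ with e̲(i₀) = j, the triple (e̲, e', e'') is not admissible, i.e. max{X̲₁, X̲₂, X̲₃(e̲)} ≤ min{X̄₁, X̄₂(e'), X̄₃(e'')} fails. -/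
open Finset

variable {n : ℕ}

theorem stmt15 (n : ℕ) (hn : 0 < n) (A : Fin n → Fin n → ℝ) (b : Fin n → ℝ)
    (hA : ∀ i j, A i j ∈ Set.Icc (0:ℝ) 1) (hb : ∀ i, b i ∈ Set.Icc (0:ℝ) 1)
    (i₀ : Fin n) (hi₀ : A i₀ i₀ < b i₀) (j : Fin n) (hj : b i₀ ≤ A i₀ j)
    (hgt : X1hi A b j < b i₀) :
    ∀ el e' e'', memEund A b el → memE' A b e' → memE'' A b e'' → el i₀ = j →
      ¬ Admissible A b el e' e'' := by
  intro el e' e'' _ _ _ hel hadm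
  have hi3 : i₀ ∈ I3set A b := by simp [I3set, hi₀]
  have hne : (I3set A b).Nonempty := ⟨i₀, hi3⟩
  have hlow : b i₀ ≤ X3lo A b el j := by
    unfold X3lo vsup
    rw [dif_pos hne]
    have : XundJ b i₀ (el i₀) j = b i₀ := by simp [XundJ, hel]
    calc b i₀ = XundJ b i₀ (el i₀) j := this.symm
      _ ≤ _ := Finset.le_sup' (fun i => XundJ b i (el i) j) hi3
  have h1 := hadm j
  have hlow' : b i₀ ≤ lowVec A b el j :=
    hlow.trans (le_max_of_le_right (le_max_right _ _))
  have hhi : hiVec A b e' e'' j ≤ X1hi A b j := min_le_left _ _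
  linarith
end

section
/- (Rule 4) Let i_r ∈ I₂ and i_s ∈ I₃ be such that A i_r i_s > b i_r and b i_r < b i_s. Then for every e̲ ∈ E̲, every e'' ∈ E'' and every e' ∈ E' with e'(i_r) = 2, the triple (e̲, e', e'') is not admissible, i.e. max{X̲₁, X̲₂, X̲₃(e̲)} ≤ min{X̄₁, X̄₂(e'), X̄₃(e'')} fails. -/
open Finset

variable {n : ℕ}

theorem stmt16 (n : ℕ) (hn : 0 < n) (A : Fin n → Fin n → ℝ) (b : Fin n → ℝ)
    (hA : ∀ i j, A i j ∈ Set.Icc (0:ℝ) 1) (hb : ∀ i, b i ∈ Set.Icc (0:ℝ) 1)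
    (iᵣ iₛ : Fin n) (hr : A iᵣ iᵣ = b iᵣ) (hs : A iₛ iₛ < b iₛ)
    (h1 : b iᵣ < A iᵣ iₛ) (h2 : b iᵣ < b iₛ) :
    ∀ el e' e'', memEund A b el → memE' A b e' → memE'' A b e'' → e' iᵣ = 2 →
      ¬ Admissible A b el e' e'' := by
  intro el e' e'' _ _ _ her hadm
  have hsI3 : iₛ ∈ I3set A b := by simp [I3set, hs]
  have hrI2 : iᵣ ∈ I2set A b := by simp [I2set, hr]
  have hlow : b iₛ ≤ lowVec A b el iₛ := by
    have h3 : b iₛ ≤ X3lo A b el iₛ := by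
      unfold X3lo vsup
      rw [dif_pos ⟨iₛ, hsI3⟩]
      have := Finset.le_sup' (fun i => XundJ b i (el i) iₛ) hsI3
      simpa [XundJ] using this
    exact le_trans h3 (le_max_of_le_right (le_max_right _ _))
  have hhi : hiVec A b e' e'' iₛ ≤ b iᵣ := by
    have h2h : X2hi A b e' iₛ ≤ b iᵣ := by
      unfold X2hi vinf
      rw [dif_pos ⟨iᵣ, hrI2⟩]
      have := Finset.inf'_le (fun i => Xsel A b (e' i) i iₛ) hrI2
      simpa [Xsel, her, Xbar2, h1] using this
    exact le_trans (min_le_of_right_le (min_le_left _ _)) h2h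
  have := hadm iₛ
  linarith
end

section
/- Suppose A i j ∈ {0,1} for all i, j and b = 0, and let c : Fin n → ℝ with c j ≠ 0 for every j. If x* ∈ S(A, 0) satisfies ∑_{j} c j · x*_j ≤ ∑_{j} c j · x_j for every x ∈ S(A, 0) (i.e. x* is an optimal solution of minimizing cᵀx over S(A, 0)), then x*_j ∈ {0,1} for every j. -/
open Finset

variable {n : ℕ}

lemma maxmin_zero_iff (hn : 0 < n) (A : Fin n → Fin n → ℝ) (hA : ∀ i j, 0 ≤ A i j)
    (x : Fin n → ℝ) (hx : inBox x) (i : Fin n) :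
    maxmin hn A x i = 0 ↔ ∀ j, min (A i j) (min (x i) (x j)) ≤ 0 := by
  constructor
  · intro h j
    have h2 := Finset.le_sup' (fun j => min (A i j) (min (x i) (x j))) (Finset.mem_univ j)
    rw [show Finset.univ.sup' _ (fun j => min (A i j) (min (x i) (x j))) = maxmin hn A x i
      from rfl, h] at h2
    exact h2
  · intro h
    apply le_antisymm
    · exact Finset.sup'_le _ _ fun j _ => h j
    · rw [maxmin]
      calc (0:ℝ) ≤ min (A i i) (min (x i) (x i)) :=
            le_min (hA i i) (le_min (hx i).1 (hx i).1)
        _ ≤ _ := Finset.le_sup' (fun j => min (A i j) (min (x i) (x j))) (Finset.mem_univ i)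

theorem stmt18 (n : ℕ) (hn : 0 < n) (A : Fin n → Fin n → ℝ)
    (hA01 : ∀ i j, A i j = 0 ∨ A i j = 1)
    (c : Fin n → ℝ) (hc : ∀ j, c j ≠ 0)
    (xs : Fin n → ℝ) (hxs : xs ∈ SallSet hn A (fun _ => 0))
    (hopt : ∀ x ∈ SallSet hn A (fun _ => 0), ∑ j, c j * xs j ≤ ∑ j, c j * x j) :
    ∀ j, xs j = 0 ∨ xs j = 1 := by
  obtain ⟨hbox, hfeas⟩ := hxs
  have hA0 : ∀ i j, 0 ≤ A i j := fun i j => by rcases hA01 i j with h | h <;> simp [h]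
  have key : ∀ i k, min (A i k) (min (xs i) (xs k)) ≤ 0 := fun i k =>
    (maxmin_zero_iff hn A hA0 xs hbox i).mp (hfeas i) k
  intro j
  by_contra hj
  push_neg at hj
  obtain ⟨hj0, hj1⟩ := hj
  have hjpos : 0 < xs j := lt_of_le_of_ne (hbox j).1 (Ne.symm hj0)
  have hjlt : xs j < 1 := lt_of_le_of_ne (hbox j).2 hj1
  -- target value
  rcases lt_or_gt_of_ne (hc j) with hcn | hcp
  · -- c j < 0 : push xs j up to 1
    set y : Fin n → ℝ := Function.update xs j 1 with hy
    have hyj : y j = 1 := by simp [hy]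
    have hyk : ∀ k, k ≠ j → y k = xs k := fun k hk => Function.update_of_ne hk _ _
    have hybox : inBox y := by
      intro k
      by_cases hk : k = j
      · subst hk; rw [hyj]; exact ⟨zero_le_one, le_refl 1⟩
      · rw [hyk k hk]; exact hbox k
    have hyfeas : ∀ i, maxmin hn A y i = 0 := by
      intro i
      rw [maxmin_zero_iff hn A hA0 y hybox i]
      intro k
      have hik := key i k
      rcases min_le_iff.mp hik with hAik | hxik
      · exact le_trans (min_le_left _ _) hAik
      · rcases min_le_iff.mp hxik with hi | hk2
        · by_cases hij : i = j
          · exact absurd (lt_of_lt_of_le hjpos (hij ▸ hi)) (lt_irrefl 0)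
          · exact le_trans (min_le_right _ _)
              (le_trans (min_le_left _ _) ((hyk i hij).trans_le hi))
        · by_cases hkj : k = j
          · exact absurd (lt_of_lt_of_le hjpos (hkj ▸ hk2)) (lt_irrefl 0)
          · exact le_trans (min_le_right _ _)
              (le_trans (min_le_right _ _) ((hyk k hkj).trans_le hk2))
    have hle := hopt y ⟨hybox, hyfeas⟩
    have e1 : ∑ k, c k * y k = c j * y j + ∑ k ∈ Finset.univ.erase j, c k * y k :=
      (Finset.add_sum_erase _ _ (Finset.mem_univ j)).symm
    have e2 : ∑ k, c k * xs k = c j * xs j + ∑ k ∈ Finset.univ.erase j, c k * xs k :=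
      (Finset.add_sum_erase _ _ (Finset.mem_univ j)).symm
    have e3 : ∑ k ∈ Finset.univ.erase j, c k * y k = ∑ k ∈ Finset.univ.erase j, c k * xs k :=
      Finset.sum_congr rfl fun k hk => by rw [hyk k (Finset.ne_of_mem_erase hk)]
    rw [e1, e2, e3, hyj] at hle
    nlinarith
  · -- c j > 0 : push xs j down to 0
    set y : Fin n → ℝ := Function.update xs j 0 with hy
    have hyj : y j = 0 := by simp [hy]
    have hyk : ∀ k, k ≠ j → y k = xs k := fun k hk => Function.update_of_ne hk _ _
    have hybox : inBox y := by
      intro k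
      by_cases hk : k = j
      · subst hk; rw [hyj]; exact ⟨le_refl 0, zero_le_one⟩
      · rw [hyk k hk]; exact hbox k
    have hyfeas : ∀ i, maxmin hn A y i = 0 := by
      intro i
      rw [maxmin_zero_iff hn A hA0 y hybox i]
      intro k
      by_cases hij : i = j
      · exact le_trans (min_le_right _ _) (le_trans (min_le_left _ _) (le_of_eq (hij ▸ hyj)))
      · by_cases hkj : k = j
        · exact le_trans (min_le_right _ _) (le_trans (min_le_right _ _) (le_of_eq (hkj ▸ hyj)))
        · rw [hyk i hij, hyk k hkj]; exact key i k
    have hle := hopt y ⟨hybox, hyfeas⟩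
    have e1 : ∑ k, c k * y k = c j * y j + ∑ k ∈ Finset.univ.erase j, c k * y k :=
      (Finset.add_sum_erase _ _ (Finset.mem_univ j)).symm
    have e2 : ∑ k, c k * xs k = c j * xs j + ∑ k ∈ Finset.univ.erase j, c k * xs k :=
      (Finset.add_sum_erase _ _ (Finset.mem_univ j)).symm
    have e3 : ∑ k ∈ Finset.univ.erase j, c k * y k = ∑ k ∈ Finset.univ.erase j, c k * xs k :=
      Finset.sum_congr rfl fun k hk => by rw [hyk k (Finset.ne_of_mem_erase hk)]
    rw [e1, e2, e3, hyj] at hle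
    nlinarith
end

section
/- Let A : Fin n → Fin n → ℝ be the adjacency matrix of a simple graph on Fin n: A is symmetric, A i j ∈ {0,1} for all i, j, and A i i = 0 for all i. Let F = {x ∈ [0,1]ⁿ : max_{j} min{A i j, x i, x j} = 0 for every i}. Call a set S ⊆ Fin n a vertex cover if for all i, j, A i j = 1 implies i ∈ S or j ∈ S, and let τ be the minimum cardinality of a vertex cover. Then there exists x* ∈ F with x*_j ∈ {0,1} for all j such that ∑_j x*_j = n − τ and ∑_j x_j ≤ n − τ for every x ∈ F; in other words, the maximum of ∑_j x_j over F is attained at a binary point and equals n minus the minimum vertex cover number. -/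
open Finset

variable {n : ℕ}

theorem stmt19 (n : ℕ) (hn : 0 < n) (A : Fin n → Fin n → ℝ)
    (hsym : ∀ i j, A i j = A j i) (hA01 : ∀ i j, A i j = 0 ∨ A i j = 1)
    (hdiag : ∀ i, A i i = 0) (τ : ℕ)
    (hτ : IsLeast {k : ℕ | ∃ C : Finset (Fin n),
      (∀ i j, A i j = 1 → i ∈ C ∨ j ∈ C) ∧ C.card = k} τ) :
    ∃ xs ∈ SallSet hn A (fun _ => 0),
      (∀ j, xs j = 0 ∨ xs j = 1) ∧ (∑ j, xs j = (n : ℝ) - τ) ∧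
      ∀ x ∈ SallSet hn A (fun _ => 0), ∑ j, x j ≤ (n : ℝ) - τ := by
  obtain ⟨⟨C, hCcov, hCcard⟩, hlb⟩ := hτ
  have hCn : C.card ≤ n := by simpa using C.card_le_univ
  set xs : Fin n → ℝ := fun j => if j ∈ C then 0 else 1 with hxs
  have hxs01 : ∀ j, xs j = 0 ∨ xs j = 1 := by
    intro j; by_cases h : j ∈ C <;> simp [hxs, h]
  have hbox : inBox xs := by
    intro j; rcases hxs01 j with h | h <;> rw [h] <;> constructor <;> norm_num
  have hnonneg : ∀ j, (0:ℝ) ≤ xs j := fun j => (hbox j).1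
  have hmm : ∀ i, maxmin hn A xs i = 0 := by
    intro i
    apply le_antisymm
    · apply Finset.sup'_le
      intro j _
      rcases hA01 i j with h | h
      · exact min_le_of_left_le (le_of_eq h)
      · rcases hCcov i j h with hi | hj
        · apply min_le_of_right_le; apply min_le_of_left_le; simp [hxs, hi]
        · apply min_le_of_right_le; apply min_le_of_right_le; simp [hxs, hj]
    · have := Finset.le_sup' (fun j => min (A i j) (min (xs i) (xs j)))
        (Finset.mem_univ i)
      refine le_trans ?_ this
      have : (0:ℝ) ≤ min (A i i) (min (xs i) (xs i)) := by
        apply le_min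
        · rw [hdiag i]
        · exact le_min (hnonneg i) (hnonneg i)
      exact this
  have hsum : ∑ j, xs j = (n : ℝ) - τ := by
    have : ∑ j, xs j = ∑ j : Fin n, ((1:ℝ) - if j ∈ C then 1 else 0) := by
      apply Finset.sum_congr rfl
      intro j _; by_cases h : j ∈ C <;> simp [hxs, h]
    rw [this, Finset.sum_sub_distrib]
    rw [Finset.sum_boole]
    have : Finset.univ.filter (fun j => j ∈ C) = C := by
      ext j; simp
    rw [this, hCcard]
    simp [Finset.card_univ]
  refine ⟨xs, ⟨hbox, hmm⟩, hxs01, hsum, ?_⟩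
  rintro x ⟨hxbox, hxmm⟩
  set C' : Finset (Fin n) := Finset.univ.filter (fun j => x j ≤ 0) with hC'
  have hC'cov : ∀ i j, A i j = 1 → i ∈ C' ∨ j ∈ C' := by
    intro i j hij
    have h1 : min (A i j) (min (x i) (x j)) ≤ 0 := by
      have h0 : maxmin hn A x i = 0 := hxmm i
      unfold maxmin at h0
      exact le_trans (Finset.le_sup' (fun k => min (A i k) (min (x i) (x k))) (Finset.mem_univ j)) (le_of_eq h0)
    rw [hij] at h1
    have h2 : min (x i) (x j) ≤ 0 := by
      rcases min_cases (1:ℝ) (min (x i) (x j)) with ⟨he, hle⟩ | ⟨he, _⟩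
      · linarith [he ▸ h1]
      · linarith [he ▸ h1]
    rcases le_total (x i) (x j) with h | h
    · left; simp [hC']; linarith [min_eq_left h ▸ h2]
    · right; simp [hC']; linarith [min_eq_right h ▸ h2]
  have hτle : τ ≤ C'.card := hlb ⟨C', hC'cov, rfl⟩
  have hbound : ∑ j, x j ≤ ∑ j : Fin n, ((1:ℝ) - if j ∈ C' then 1 else 0) := by
    apply Finset.sum_le_sum
    intro j _
    by_cases h : j ∈ C'
    · have : x j ≤ 0 := by simpa [hC'] using h
      simp [h]; linarith
    · simp [h]; exact (hxbox j).2
  have hrhs : ∑ j : Fin n, ((1:ℝ) - if j ∈ C' then 1 else 0) = (n:ℝ) - C'.card := by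
    rw [Finset.sum_sub_distrib, Finset.sum_boole]
    have : Finset.univ.filter (fun j => j ∈ C') = C' := by ext j; simp
    rw [this]; simp [Finset.card_univ]
  have : (C'.card : ℝ) ≥ τ := by exact_mod_cast hτle
  calc ∑ j, x j ≤ (n:ℝ) - C'.card := by rw [← hrhs]; exact hbound
    _ ≤ (n:ℝ) - τ := by linarith
end
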